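/- For 1 ≤ k ≤ n, R_{n,k} − R_{n,k−1} = (1/(n·2^{n−1})) · (1/C(n−1,k−1)) · Σ_{i=k}^{n} C(n,i) > 0; in particular k ↦ R_{n,k} is strictly increasing on 0 ≤ k ≤ n. -/

import Mathlib

/-- Resistance between vertices at Hamming distance `k` in the `n`-cube of unit resistors. -/
noncomputable def cubeRes (n k : ℕ) : ℝ :=
  (2 / n) * ∑ j ∈ Finset.range k,
    (1 / ((n - 1).choose j : ℝ)) * ((1 / 2 ^ n) * ∑ i ∈ Finset.Icc (j + 1) n, (n.choose i : ℝ))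

theorem cubeRes_succ_sub (n k : ℕ) :
    cubeRes n (k + 1) - cubeRes n k =
      (1 / (n * 2 ^ (n - 1) : ℝ)) * (1 / ((n - 1).choose k : ℝ)) *
        ∑ i ∈ Finset.Icc (k + 1) n, (n.choose i : ℝ) := by
  rw [cubeRes, cubeRes, Finset.sum_range_succ, mul_add, add_sub_cancel_left]
  cases n with
  | zero => simp -- both sides are junk `_ / 0 = 0`
  | succ n =>
    rw [Nat.add_sub_cancel, pow_succ]
    field_simp

theorem sum_Icc_choose_pos {n k : ℕ} (hkn : k ≤ n) :
    0 < ∑ i ∈ Finset.Icc k n, (n.choose i : ℝ) :=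
  Finset.sum_pos (fun i hi => by exact_mod_cast Nat.choose_pos (Finset.mem_Icc.mp hi).2)
    ⟨n, Finset.mem_Icc.mpr ⟨hkn, le_rfl⟩⟩

theorem stmt_17 (n k : ℕ) (hk : 1 ≤ k) (hkn : k ≤ n) :
    cubeRes n k - cubeRes n (k - 1) =
      (1 / (n * 2 ^ (n - 1) : ℝ)) * (1 / ((n - 1).choose (k - 1) : ℝ)) *
        ∑ i ∈ Finset.Icc k n, (n.choose i : ℝ) ∧
    cubeRes n (k - 1) < cubeRes n k := by
  obtain ⟨m, rfl⟩ : ∃ m, k = m + 1 := ⟨k - 1, by omega⟩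
  have hdiff := cubeRes_succ_sub n m
  rw [Nat.add_sub_cancel]
  refine ⟨hdiff, sub_pos.mp ?_⟩
  have hn : (0 : ℝ) < n := by exact_mod_cast (show 0 < n by omega)
  have hchoose : (0 : ℝ) < (n - 1).choose m := by exact_mod_cast Nat.choose_pos (by omega)
  have htail := sum_Icc_choose_pos hkn
  rw [hdiff]
  positivity
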